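/- arXiv:2311.07596 — 4 statements merged into one kernel-verified Lean document; each statement's English description precedes it below -/
import Mathlib

section
/- For 1 < p < ∞, c > 0, ε > 0 and base metric d, the assignment-vector form of the graph GOSPA distance equals its binary-matrix form: min over π ∈ Π_{V_X,V_Y} of ( Σ_{i=1}^{n_X} d(x_i, y_{π_i})^p + (c^p/2)(n_X + n_Y − 2·#{i : π_i > 0}) + e_{X,Y}(π)^p ) equals min over W ∈ 𝒲_{X,Y} of ( tr[D_{X,Y}ᵀW] + (ε^p/2)‖A_X W' − W' A_Y‖ ), where d(x_i, y_{π_i})^p is counted only for i with π_i > 0. -/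
open scoped BigOperators Matrix

namespace GraphGOSPA

/-- An undirected unweighted graph with node attributes in a metric space `𝕏`:
a finite list of distinct nodes together with a symmetric `{0,1}`-valued
adjacency matrix with zero diagonal. -/
structure Graph (𝕏 : Type*) [MetricSpace 𝕏] where
  n : ℕ
  nodes : Fin n → 𝕏
  nodes_inj : Function.Injective nodes
  A : Matrix (Fin n) (Fin n) ℝ
  A_symm : A.IsSymm
  A_01 : ∀ i j, A i j = 0 ∨ A i j = 1
  A_diag : ∀ i, A i i = 0

variable {𝕏 : Type*} [MetricSpace 𝕏]

/-- Componentwise 1-norm of a matrix. -/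
def onorm {m n : ℕ} (M : Matrix (Fin m) (Fin n) ℝ) : ℝ :=
  ∑ i, ∑ j, |M i j|

/-- The top-left `m × n` block of an `(m+1) × (n+1)` matrix. -/
def topLeft {m n : ℕ} (W : Matrix (Fin (m+1)) (Fin (n+1)) ℝ) :
    Matrix (Fin m) (Fin n) ℝ :=
  fun i j => W i.castSucc j.castSucc

/-- The set `𝒲_{X,Y}` of binary assignment matrices: entries in `{0,1}`,
each of the first `nY` columns sums to 1, each of the first `nX` rows sums to 1,
and the bottom-right corner is 0. -/
def Wset (nX nY : ℕ) : Set (Matrix (Fin (nX+1)) (Fin (nY+1)) ℝ) :=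
  {W | (∀ i j, W i j = 0 ∨ W i j = 1) ∧
    (∀ j : Fin nY, ∑ i, W i j.castSucc = 1) ∧
    (∀ i : Fin nX, ∑ j, W i.castSucc j = 1) ∧
    W (Fin.last nX) (Fin.last nY) = 0}

/-- The relaxed set `𝒲̄_{X,Y}`: nonnegative entries, with the same
row/column sum constraints and zero bottom-right corner. -/
def WbarSet (nX nY : ℕ) : Set (Matrix (Fin (nX+1)) (Fin (nY+1)) ℝ) :=
  {W | (∀ i j, 0 ≤ W i j) ∧
    (∀ j : Fin nY, ∑ i, W i j.castSucc = 1) ∧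
    (∀ i : Fin nX, ∑ j, W i.castSucc j = 1) ∧
    W (Fin.last nX) (Fin.last nY) = 0}

/-- The cost matrix `D_{X,Y}`. -/
noncomputable def Dmat (p c : ℝ) (X Y : Graph 𝕏) :
    Matrix (Fin (X.n+1)) (Fin (Y.n+1)) ℝ :=
  fun i j =>
    if hi : (i : ℕ) < X.n then
      if hj : (j : ℕ) < Y.n then dist (X.nodes ⟨i, hi⟩) (Y.nodes ⟨j, hj⟩) ^ p
      else c ^ p / 2
    else if (j : ℕ) < Y.n then c ^ p / 2 else 0

/-- The graph GOSPA objective `tr[D_{X,Y}ᵀ W] + (ε^p/2) ‖A_X W' − W' A_Y‖`. -/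
noncomputable def obj (p c ε : ℝ) (X Y : Graph 𝕏)
    (W : Matrix (Fin (X.n+1)) (Fin (Y.n+1)) ℝ) : ℝ :=
  Matrix.trace ((Dmat p c X Y)ᵀ * W) +
    ε ^ p / 2 * onorm (X.A * topLeft W - topLeft W * Y.A)

/-- The graph GOSPA distance (minimum over binary assignment matrices). -/
noncomputable def gospa (p c ε : ℝ) (X Y : Graph 𝕏) : ℝ :=
  sInf {v | ∃ W ∈ Wset X.n Y.n, v = obj p c ε X Y W} ^ (1 / p)

/-- The LP graph GOSPA distance (minimum over relaxed assignment matrices). -/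
noncomputable def gospaLP (p c ε : ℝ) (X Y : Graph 𝕏) : ℝ :=
  sInf {v | ∃ W ∈ WbarSet X.n Y.n, v = obj p c ε X Y W} ^ (1 / p)

/-- The node set of a graph. -/
def nodeSet (X : Graph 𝕏) : Set 𝕏 := Set.range X.nodes

/-- The edge set of a graph, as a set of unordered pairs of attributes. -/
def edgeSet (X : Graph 𝕏) : Set (Sym2 𝕏) :=
  {e | ∃ i j, X.A i j = 1 ∧ e = s(X.nodes i, X.nodes j)}

/-- Two graphs are equal when they have the same node set and the same edge set. -/
def GraphEq (X Y : Graph 𝕏) : Prop :=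
  nodeSet X = nodeSet Y ∧ edgeSet X = edgeSet Y

/-- The set `Π_{V_X,V_Y}` of assignment vectors between node index sets of sizes
`nX` and `nY`: `π i = some j` means node `i` of `X` is assigned to node `j` of `Y`
(`π_i = j > 0` in the paper), and `π i = none` means node `i` is unassigned
(`π_i = 0`); two different nodes cannot be assigned to the same node of `Y`. -/
def AssignSet (nX nY : ℕ) : Set (Fin nX → Option (Fin nY)) :=
  {π | ∀ ⦃i i' : Fin nX⦄ ⦃j : Fin nY⦄, π i = some j → π i' = some j → i = i'}

/-- Localisation cost of an assignment vector: `Σ_i d(x_i, y_{π_i})^p`,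
counted only for `i` with `π_i > 0`. -/
noncomputable def locCost (p : ℝ) (X Y : Graph 𝕏)
    (π : Fin X.n → Option (Fin Y.n)) : ℝ :=
  ∑ i, (π i).elim 0 fun j => dist (X.nodes i) (Y.nodes j) ^ p

/-- Cardinality cost of an assignment vector:
`(c^p/2)(n_X + n_Y − 2·#{i : π_i > 0})`. -/
noncomputable def cardCost (p c : ℝ) (X Y : Graph 𝕏)
    (π : Fin X.n → Option (Fin Y.n)) : ℝ :=
  c ^ p / 2 * ((X.n : ℝ) + (Y.n : ℝ)
    - 2 * ({i : Fin X.n | (π i).isSome} : Finset (Fin X.n)).card)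

/-- Edge mismatch cost `e_{X,Y}(π)^p` of an assignment vector. -/
noncomputable def edgeCostAssign (p ε : ℝ) (X Y : Graph 𝕏)
    (π : Fin X.n → Option (Fin Y.n)) : ℝ :=
  ε ^ p / 2 *
    ((∑ i, ∑ j, (π i).elim 0 fun pi => (π j).elim 0 fun pj =>
        |X.A i j - Y.A pi pj|)
    + (∑ i, ∑ j, if (π i).isNone ∧ (π j).isSome then X.A i j else 0)
    + (∑ i', ∑ j', if (∀ l, π l ≠ some i') ∧ (∃ l, π l = some j')
        then Y.A i' j' else 0))



section Aux
variable {nX nY : ℕ}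

/-- matrix induced by an assignment vector -/
def Wof (π : Fin nX → Option (Fin nY)) :
    Matrix (Fin (nX+1)) (Fin (nY+1)) ℝ :=
  fun i j =>
    if hi : (i : ℕ) < nX then
      if hj : (j : ℕ) < nY then (if π ⟨i, hi⟩ = some ⟨j, hj⟩ then 1 else 0)
      else (if π ⟨i, hi⟩ = none then 1 else 0)
    else if hj : (j : ℕ) < nY then
      (if ∀ l, π l ≠ some ⟨j, hj⟩ then 1 else 0)
    else 0

@[simp] lemma Wof_cc (π : Fin nX → Option (Fin nY)) (i : Fin nX) (j : Fin nY) :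
    Wof π i.castSucc j.castSucc = if π i = some j then 1 else 0 := by
  simp [Wof, i.is_lt, j.is_lt]

@[simp] lemma Wof_cl (π : Fin nX → Option (Fin nY)) (i : Fin nX) :
    Wof π i.castSucc (Fin.last nY) = if π i = none then 1 else 0 := by
  simp [Wof, i.is_lt]

@[simp] lemma Wof_lc (π : Fin nX → Option (Fin nY)) (j : Fin nY) :
    Wof π (Fin.last nX) j.castSucc = if ∀ l, π l ≠ some j then 1 else 0 := by
  simp [Wof, j.is_lt]

@[simp] lemma Wof_ll (π : Fin nX → Option (Fin nY)) :
    Wof π (Fin.last nX) (Fin.last nY) = 0 := by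
  simp [Wof]

/-- partial inverse of an assignment vector -/
noncomputable def pinv (π : Fin nX → Option (Fin nY)) (j : Fin nY) : Option (Fin nX) :=
  if h : ∃ l, π l = some j then some h.choose else none

lemma pinv_eq_some {π : Fin nX → Option (Fin nY)}
    (hπ : ∀ ⦃i i' : Fin nX⦄ ⦃j : Fin nY⦄, π i = some j → π i' = some j → i = i')
    {j : Fin nY} {l : Fin nX} : pinv π j = some l ↔ π l = some j := by
  constructor
  · intro h
    by_cases he : ∃ l, π l = some j
    · rw [pinv, dif_pos he] at h
      obtain rfl : he.choose = l := by simpa using h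
      exact he.choose_spec
    · rw [pinv, dif_neg he] at h; simp at h
  · intro h
    have he : ∃ l, π l = some j := ⟨l, h⟩
    rw [pinv, dif_pos he]
    exact congrArg some (hπ he.choose_spec h)

lemma pinv_eq_none {π : Fin nX → Option (Fin nY)} {j : Fin nY} :
    pinv π j = none ↔ ∀ l, π l ≠ some j := by
  constructor
  · intro h l hl
    rw [pinv, dif_pos ⟨l, hl⟩] at h; simp at h
  · intro h
    rw [pinv, dif_neg (by simpa using h)]

lemma elim_as_sum {α : Type*} [Fintype α] [DecidableEq α] (o : Option α) (g : α → ℝ) :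
    o.elim 0 g = ∑ j, if o = some j then g j else 0 := by
  cases o with
  | none => simp
  | some j0 => simp

/-- key reindexing lemma -/
lemma sum_reindex {π : Fin nX → Option (Fin nY)}
    (hπ : ∀ ⦃i i' : Fin nX⦄ ⦃j : Fin nY⦄, π i = some j → π i' = some j → i = i')
    (g : Fin nX → Fin nY → ℝ) :
    ∑ i, (π i).elim 0 (g i) = ∑ j, (pinv π j).elim 0 (fun l => g l j) := by
  have h1 : ∀ i, (π i).elim 0 (g i) = ∑ j, if π i = some j then g i j else 0 :=
    fun i => elim_as_sum _ _
  have h2 : ∀ j, (pinv π j).elim 0 (fun l => g l j)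
      = ∑ i, if π i = some j then g i j else 0 := by
    intro j
    rw [elim_as_sum]
    refine Finset.sum_congr rfl fun i _ => ?_
    simp only [pinv_eq_some hπ]
  simp_rw [h1, h2]
  exact Finset.sum_comm

end Aux
section Aux2
variable {nX nY : ℕ}

lemma row_sum (π : Fin nX → Option (Fin nY)) (i : Fin nX) :
    (∑ j : Fin nY, if π i = some j then (1:ℝ) else 0)
      + (if π i = none then 1 else 0) = 1 := by
  cases h : π i with
  | none => simp
  | some j0 => simp [Finset.sum_ite_eq]

lemma col_sum {π : Fin nX → Option (Fin nY)}
    (hπ : π ∈ AssignSet nX nY) (j : Fin nY) :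
    (∑ i : Fin nX, if π i = some j then (1:ℝ) else 0)
      + (if ∀ l, π l ≠ some j then 1 else 0) = 1 := by
  cases h : pinv π j with
  | none =>
      have h' := pinv_eq_none.mp h
      rw [Finset.sum_eq_zero fun i _ => if_neg (h' i), if_pos h']
      ring
  | some l =>
      have hl := (pinv_eq_some hπ).mp h
      have hs : (∑ i : Fin nX, if π i = some j then (1:ℝ) else 0) = 1 := by
        rw [Finset.sum_eq_single l]
        · rw [if_pos hl]
        · intro b _ hb
          exact if_neg fun hbl => hb (hπ hbl hl)
        · simp
      rw [hs, if_neg (by push_neg; exact ⟨l, hl⟩)]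
      ring

lemma Wof_mem {π : Fin nX → Option (Fin nY)} (hπ : π ∈ AssignSet nX nY) :
    Wof π ∈ Wset nX nY := by
  refine ⟨fun i j => ?_, fun j => ?_, fun i => ?_, Wof_ll π⟩
  · unfold Wof; split_ifs <;> simp
  · rw [Fin.sum_univ_castSucc]
    simpa using col_sum hπ j
  · rw [Fin.sum_univ_castSucc]
    simpa using row_sum π i

end Aux2
section Aux3
variable {𝕏 : Type*} [MetricSpace 𝕏] {nX nY : ℕ}

lemma trace_eq {m n : ℕ} (D W : Matrix (Fin m) (Fin n) ℝ) :
    Matrix.trace (Dᵀ * W) = ∑ i, ∑ j, D i j * W i j := by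
  simp [Matrix.trace, Matrix.mul_apply, Matrix.diag]
  exact Finset.sum_comm

@[simp] lemma Dmat_cc (p c : ℝ) (X Y : Graph 𝕏) (i : Fin X.n) (j : Fin Y.n) :
    Dmat p c X Y i.castSucc j.castSucc = dist (X.nodes i) (Y.nodes j) ^ p := by
  simp [Dmat, i.is_lt, j.is_lt]

@[simp] lemma Dmat_cl (p c : ℝ) (X Y : Graph 𝕏) (i : Fin X.n) :
    Dmat p c X Y i.castSucc (Fin.last Y.n) = c ^ p / 2 := by
  simp [Dmat, i.is_lt]

@[simp] lemma Dmat_lc (p c : ℝ) (X Y : Graph 𝕏) (j : Fin Y.n) :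
    Dmat p c X Y (Fin.last X.n) j.castSucc = c ^ p / 2 := by
  simp [Dmat, j.is_lt]

@[simp] lemma Dmat_ll (p c : ℝ) (X Y : Graph 𝕏) :
    Dmat p c X Y (Fin.last X.n) (Fin.last Y.n) = 0 := by
  simp [Dmat]

lemma card_isSome (π : Fin nX → Option (Fin nY)) :
    ((({i : Fin nX | (π i).isSome} : Finset (Fin nX)).card : ℝ))
      = ∑ i : Fin nX, if (π i).isSome then (1:ℝ) else 0 := by
  rw [Finset.card_filter]
  push_cast
  simp

lemma sum_none (π : Fin nX → Option (Fin nY)) :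
    (∑ i : Fin nX, if π i = none then (1:ℝ) else 0)
      = nX - ∑ i : Fin nX, if (π i).isSome then (1:ℝ) else 0 := by
  have h : ∀ i, (if π i = none then (1:ℝ) else 0)
      = 1 - (if (π i).isSome then 1 else 0) := fun i => by cases π i <;> simp
  rw [Finset.sum_congr rfl fun i _ => h i, Finset.sum_sub_distrib]
  simp

end Aux3
section Aux4
variable {𝕏 : Type*} [MetricSpace 𝕏] {nX nY : ℕ}

lemma sum_unmatched {π : Fin nX → Option (Fin nY)} (hπ : π ∈ AssignSet nX nY) :
    (∑ j : Fin nY, if ∀ l, π l ≠ some j then (1:ℝ) else 0)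
      = nY - ∑ i : Fin nX, if (π i).isSome then (1:ℝ) else 0 := by
  have h : ∀ j : Fin nY, (if ∀ l, π l ≠ some j then (1:ℝ) else 0)
      = 1 - (pinv π j).elim 0 (fun _ => 1) := by
    intro j
    cases hj : pinv π j with
    | none => simp [pinv_eq_none.mp hj]
    | some l =>
        have := (pinv_eq_some hπ).mp hj
        rw [if_neg (by push_neg; exact ⟨l, this⟩)]
        simp
  rw [Finset.sum_congr rfl fun j _ => h j, Finset.sum_sub_distrib,
    ← sum_reindex hπ (fun _ _ => (1:ℝ))]
  have h2 : ∀ i, (π i).elim (0:ℝ) (fun _ => 1)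
      = if (π i).isSome then 1 else 0 := fun i => by cases π i <;> simp
  rw [Finset.sum_congr rfl fun i _ => h2 i]
  simp

lemma trace_Wof {X Y : Graph 𝕏} {π : Fin X.n → Option (Fin Y.n)} (p c : ℝ)
    (hπ : π ∈ AssignSet X.n Y.n) :
    Matrix.trace ((Dmat p c X Y)ᵀ * Wof π)
      = locCost p X Y π + cardCost p c X Y π := by
  rw [trace_eq, Fin.sum_univ_castSucc]
  have hrow : ∀ i : Fin X.n,
      (∑ j, Dmat p c X Y i.castSucc j * Wof π i.castSucc j)
        = ((π i).elim 0 fun j => dist (X.nodes i) (Y.nodes j) ^ p)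
          + c ^ p / 2 * (if π i = none then 1 else 0) := by
    intro i
    rw [Fin.sum_univ_castSucc, elim_as_sum]
    simp [mul_ite]
  have hlast :
      (∑ j, Dmat p c X Y (Fin.last X.n) j * Wof π (Fin.last X.n) j)
        = c ^ p / 2 * ∑ j : Fin Y.n, if ∀ l, π l ≠ some j then (1:ℝ) else 0 := by
    rw [Fin.sum_univ_castSucc, Finset.mul_sum]
    simp only [Dmat_lc, Dmat_ll, Wof_lc, Wof_ll, mul_ite, mul_one, mul_zero,
      zero_mul, add_zero]
  rw [Finset.sum_congr rfl fun i _ => hrow i, hlast, Finset.sum_add_distrib,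
    ← Finset.mul_sum, sum_unmatched hπ]
  unfold locCost cardCost
  rw [sum_none π, card_isSome]
  ring

end Aux4
section Aux5
variable {𝕏 : Type*} [MetricSpace 𝕏]

lemma mulA_apply {X Y : Graph 𝕏} {π : Fin X.n → Option (Fin Y.n)}
    (hπ : π ∈ AssignSet X.n Y.n) (i : Fin X.n) (j : Fin Y.n) :
    (X.A * topLeft (Wof π)) i j = (pinv π j).elim 0 fun l => X.A i l := by
  rw [Matrix.mul_apply, elim_as_sum]
  refine Finset.sum_congr rfl fun l _ => ?_
  simp only [topLeft, Wof_cc, mul_ite, mul_one, mul_zero, pinv_eq_some hπ]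

lemma Amul_apply {X Y : Graph 𝕏} (π : Fin X.n → Option (Fin Y.n))
    (i : Fin X.n) (j : Fin Y.n) :
    (topLeft (Wof π) * Y.A) i j = (π i).elim 0 fun pi => Y.A pi j := by
  rw [Matrix.mul_apply, elim_as_sum]
  refine Finset.sum_congr rfl fun l _ => ?_
  simp only [topLeft, Wof_cc, ite_mul, one_mul, zero_mul]

lemma abs_entry {X Y : Graph 𝕏} {π : Fin X.n → Option (Fin Y.n)}
    (hπ : π ∈ AssignSet X.n Y.n) (i : Fin X.n) (j : Fin Y.n) :
    |(X.A * topLeft (Wof π) - topLeft (Wof π) * Y.A) i j|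
      = ((pinv π j).elim 0 fun l => (π i).elim 0 fun pi => |X.A i l - Y.A pi j|)
      + ((pinv π j).elim 0 fun l => if (π i).isNone then X.A i l else 0)
      + (if pinv π j = none then (π i).elim 0 fun pi => Y.A pi j else 0) := by
  have hX : ∀ a b, 0 ≤ X.A a b := fun a b => by rcases X.A_01 a b with h | h <;> simp [h]
  have hY : ∀ a b, 0 ≤ Y.A a b := fun a b => by rcases Y.A_01 a b with h | h <;> simp [h]
  rw [Matrix.sub_apply, mulA_apply hπ, Amul_apply]
  cases hj : pinv π j with
  | none =>
      cases hi : π i with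
      | none => simp
      | some pi => simp [abs_of_nonneg (hY pi j)]
  | some l =>
      cases hi : π i with
      | none => simp [abs_of_nonneg (hX i l)]
      | some pi => simp

end Aux5
section Aux6
variable {𝕏 : Type*} [MetricSpace 𝕏]

lemma pinv_isSome {nX nY : ℕ} {π : Fin nX → Option (Fin nY)} {j : Fin nY} :
    (pinv π j).isSome ↔ ∃ l, π l = some j := by
  unfold pinv
  split
  · simpa using ‹∃ l, π l = some j›
  · simpa using ‹¬∃ l, π l = some j›

lemma onorm_Wof {X Y : Graph 𝕏} {π : Fin X.n → Option (Fin Y.n)}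
    (hπ : π ∈ AssignSet X.n Y.n) :
    onorm (X.A * topLeft (Wof π) - topLeft (Wof π) * Y.A)
      = (∑ i, ∑ j, (π i).elim 0 fun pi => (π j).elim 0 fun pj =>
          |X.A i j - Y.A pi pj|)
      + (∑ i, ∑ j, if (π i).isNone ∧ (π j).isSome then X.A i j else 0)
      + (∑ i', ∑ j', if (∀ l, π l ≠ some i') ∧ (∃ l, π l = some j')
          then Y.A i' j' else 0) := by
  unfold onorm
  rw [Finset.sum_congr rfl fun i _ => Finset.sum_congr rfl fun j _ => abs_entry hπ i j]
  simp only [Finset.sum_add_distrib]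
  congr 1
  · congr 1
    -- S1
    · refine Finset.sum_congr rfl fun i _ => ?_
      rw [← sum_reindex hπ (fun j pj => (π i).elim 0 fun pi => |X.A i j - Y.A pi pj|)]
      refine Finset.sum_congr rfl fun j _ => ?_
      cases π i <;> cases π j <;> simp
    -- S2
    · refine Finset.sum_congr rfl fun i _ => ?_
      rw [← sum_reindex hπ (fun j (_ : Fin Y.n) => if (π i).isNone then X.A i j else 0)]
      refine Finset.sum_congr rfl fun j _ => ?_
      cases π j <;> simp
  -- S3
  · rw [Finset.sum_comm]
    refine Finset.sum_congr rfl fun a _ => ?_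
    have hpull : (∑ i, if pinv π a = none then (π i).elim 0 fun pi => Y.A pi a else 0)
        = if pinv π a = none then ∑ i, (π i).elim 0 fun pi => Y.A pi a else 0 := by
      split <;> simp
    rw [hpull, sum_reindex hπ (fun _ pi => Y.A pi a)]
    have hpush : (if pinv π a = none then
          ∑ b, (pinv π b).elim 0 fun _ => Y.A b a else 0)
        = ∑ b, if pinv π a = none ∧ (pinv π b).isSome then Y.A b a else 0 := by
      by_cases h : pinv π a = none
      · rw [if_pos h]
        refine Finset.sum_congr rfl fun b _ => ?_
        cases pinv π b <;> simp [h]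
      · rw [if_neg h]
        refine (Finset.sum_eq_zero fun b _ => ?_).symm
        simp [h]
    rw [hpush]
    refine Finset.sum_congr rfl fun b _ => ?_
    rw [show Y.A b a = Y.A a b from Y.A_symm.apply a b]
    congr 1
    simp only [eq_iff_iff]
    rw [pinv_eq_none, pinv_isSome]

end Aux6
section Aux7
variable {𝕏 : Type*} [MetricSpace 𝕏]

lemma obj_Wof {X Y : Graph 𝕏} {π : Fin X.n → Option (Fin Y.n)}
    (p c ε : ℝ) (hπ : π ∈ AssignSet X.n Y.n) :
    obj p c ε X Y (Wof π)
      = locCost p X Y π + cardCost p c X Y π + edgeCostAssign p ε X Y π := by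
  unfold obj edgeCostAssign
  rw [trace_Wof p c hπ, onorm_Wof hπ]

lemma one_unique {m : ℕ} {f : Fin m → ℝ} (h01 : ∀ x, f x = 0 ∨ f x = 1)
    (hsum : ∑ x, f x = 1) {a b : Fin m} (ha : f a = 1) (hb : f b = 1) : a = b := by
  by_contra hne
  have hnn : ∀ x, 0 ≤ f x := fun x => by rcases h01 x with h | h <;> simp [h]
  have h2 : f a + f b ≤ ∑ x, f x := by
    rw [← Finset.sum_pair hne]
    exact Finset.sum_le_sum_of_subset_of_nonneg (Finset.subset_univ _)
      fun x _ _ => hnn x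
  rw [ha, hb, hsum] at h2
  linarith

lemma one_exists {m : ℕ} {f : Fin m → ℝ} (h01 : ∀ x, f x = 0 ∨ f x = 1)
    (hsum : ∑ x, f x = 1) : ∃ x, f x = 1 := by
  by_contra h
  push_neg at h
  have hz : ∀ x, f x = 0 := fun x => (h01 x).resolve_right (h x)
  rw [Finset.sum_eq_zero fun x _ => hz x] at hsum
  norm_num at hsum

/-- assignment vector induced by a binary matrix -/
noncomputable def pof {nX nY : ℕ} (W : Matrix (Fin (nX+1)) (Fin (nY+1)) ℝ) :
    Fin nX → Option (Fin nY) :=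
  fun i => if h : ∃ j : Fin nY, W i.castSucc j.castSucc = 1 then some h.choose else none

lemma pof_some {nX nY : ℕ} {W : Matrix (Fin (nX+1)) (Fin (nY+1)) ℝ}
    (hW : W ∈ Wset nX nY) {i : Fin nX} {j : Fin nY} :
    pof W i = some j ↔ W i.castSucc j.castSucc = 1 := by
  obtain ⟨h01, hcol, hrow, hll⟩ := hW
  constructor
  · intro h
    by_cases he : ∃ j : Fin nY, W i.castSucc j.castSucc = 1
    · rw [pof, dif_pos he] at h
      obtain rfl : he.choose = j := by simpa using h
      exact he.choose_spec
    · rw [pof, dif_neg he] at h; simp at h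
  · intro h
    have he : ∃ j : Fin nY, W i.castSucc j.castSucc = 1 := ⟨j, h⟩
    rw [pof, dif_pos he]
    have := one_unique (f := fun j' => W i.castSucc j')
      (fun j' => h01 _ j') (hrow i) he.choose_spec h
    exact congrArg some (Fin.castSucc_injective _ this)

lemma pof_mem {nX nY : ℕ} {W : Matrix (Fin (nX+1)) (Fin (nY+1)) ℝ}
    (hW : W ∈ Wset nX nY) : pof W ∈ AssignSet nX nY := by
  intro i i' j hi hi'
  have h1 := (pof_some hW).mp hi
  have h2 := (pof_some hW).mp hi'
  obtain ⟨h01, hcol, hrow, hll⟩ := hW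
  exact Fin.castSucc_injective _
    (one_unique (f := fun i'' => W i'' j.castSucc) (fun i'' => h01 i'' _)
      (hcol j) h1 h2)

lemma Wof_pof {nX nY : ℕ} {W : Matrix (Fin (nX+1)) (Fin (nY+1)) ℝ}
    (hW : W ∈ Wset nX nY) : Wof (pof W) = W := by
  obtain ⟨h01, hcol, hrow, hll⟩ := hW
  funext a b
  induction a using Fin.lastCases with
  | last =>
      induction b using Fin.lastCases with
      | last => rw [Wof_ll, hll]
      | cast j =>
          rw [Wof_lc]
          by_cases hex : ∃ l, pof W l = some j
          · obtain ⟨l, hl⟩ := hex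
            have h1 := (pof_some ⟨h01, hcol, hrow, hll⟩).mp hl
            rw [if_neg fun hall => hall l hl]
            rcases h01 (Fin.last nX) j.castSucc with h | h
            · rw [h]
            · exact absurd (one_unique (f := fun i'' => W i'' j.castSucc)
                (fun i'' => h01 i'' _) (hcol j) h1 h)
                (Fin.castSucc_lt_last l).ne
          · push_neg at hex
            rw [if_pos hex]
            obtain ⟨x, hx⟩ := one_exists (f := fun i'' => W i'' j.castSucc)
              (fun i'' => h01 i'' _) (hcol j)
            rcases Fin.eq_castSucc_or_eq_last x with ⟨l, rfl⟩ | rfl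
            · exact absurd ((pof_some ⟨h01, hcol, hrow, hll⟩).mpr hx) (hex l)
            · rw [hx]
  | cast i =>
      induction b using Fin.lastCases with
      | last =>
          rw [Wof_cl]
          cases hp : pof W i with
          | some j =>
              have h1 := (pof_some ⟨h01, hcol, hrow, hll⟩).mp hp
              rw [if_neg (by simp)]
              rcases h01 i.castSucc (Fin.last nY) with h | h
              · rw [h]
              · exact absurd (one_unique (f := fun j' => W i.castSucc j')
                  (fun j' => h01 _ j') (hrow i) h1 h)
                  (Fin.castSucc_lt_last j).ne
          | none =>
              rw [if_pos rfl]
              have hno : ∀ j : Fin nY, W i.castSucc j.castSucc ≠ 1 := by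
                intro j h
                rw [(pof_some ⟨h01, hcol, hrow, hll⟩).mpr h] at hp
                cases hp
              obtain ⟨x, hx⟩ := one_exists (f := fun j' => W i.castSucc j')
                (fun j' => h01 _ j') (hrow i)
              rcases Fin.eq_castSucc_or_eq_last x with ⟨l, rfl⟩ | rfl
              · exact absurd hx (hno l)
              · rw [hx]
      | cast j =>
          rw [Wof_cc]
          rcases h01 i.castSucc j.castSucc with h | h
          · rw [h, if_neg]
            intro hp
            have := (pof_some ⟨h01, hcol, hrow, hll⟩).mp hp
            rw [h] at this
            norm_num at this
          · rw [h, if_pos ((pof_some ⟨h01, hcol, hrow, hll⟩).mpr h)]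

end Aux7
/-- For `1 < p < ∞`, `c > 0`, `ε > 0` and base metric `d`, the
assignment-vector form of the graph GOSPA distance equals its binary-matrix form:
the minimum over `π ∈ Π_{V_X,V_Y}` of
`Σ_{i:π_i>0} d(x_i,y_{π_i})^p + (c^p/2)(n_X+n_Y−2·#{i:π_i>0}) + e_{X,Y}(π)^p`
equals the minimum over `W ∈ 𝒲_{X,Y}` of
`tr[D_{X,Y}ᵀW] + (ε^p/2)‖A_X W' − W' A_Y‖`. -/
theorem assign_form_eq_matrix_form (p c ε : ℝ) (hp : 1 < p) (hc : 0 < c)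
    (hε : 0 < ε) (X Y : Graph 𝕏) :
    sInf {v | ∃ π ∈ AssignSet X.n Y.n,
        v = locCost p X Y π + cardCost p c X Y π + edgeCostAssign p ε X Y π} =
    sInf {v | ∃ W ∈ Wset X.n Y.n, v = obj p c ε X Y W} := by
  have hset : {v | ∃ π ∈ AssignSet X.n Y.n,
        v = locCost p X Y π + cardCost p c X Y π + edgeCostAssign p ε X Y π}
      = {v | ∃ W ∈ Wset X.n Y.n, v = obj p c ε X Y W} := by
    ext v
    simp only [Set.mem_setOf_eq]
    constructor
    · rintro ⟨π, hπ, rfl⟩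
      exact ⟨Wof π, Wof_mem hπ, (obj_Wof p c ε hπ).symm⟩
    · rintro ⟨W, hW, rfl⟩
      refine ⟨pof W, pof_mem hW, ?_⟩
      have h := obj_Wof p c ε (pof_mem hW)
      rw [Wof_pof hW] at h
      exact h
  rw [hset]

end GraphGOSPA
end

section
/- For 1 ≤ p < ∞, c > 0, ε > 0 and base metric d, the LP graph GOSPA distance d̄^{(c,ε)} is a metric on the space of undirected unweighted graphs with node attributes: for all graphs X, Y, Z, (i) d̄^{(c,ε)}(X,Y) = 0 if and only if X = Y; (ii) d̄^{(c,ε)}(X,Y) = d̄^{(c,ε)}(Y,X); (iii) d̄^{(c,ε)}(X,Y) ≤ d̄^{(c,ε)}(X,Z) + d̄^{(c,ε)}(Z,Y). -/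
open scoped BigOperators Matrix

namespace GraphGOSPA

variable {𝕏 : Type*} [MetricSpace 𝕏]

/-!
The infimum is attained because `WbarSet` is compact and `obj` is continuous, and transposing a
plan exchanges the roles of `X` and `Y`. A plan of cost zero moves no mass to or from a dummy node
and only between equal nodes; as the node maps are injective, its top-left block is a permutation
matrix, and the vanishing edge term says that this permutation carries `A_X` to `A_Y`.

For the triangle inequality, optimal plans `W₁` from `X` to `Z` and `W₂` from `Z` to `Y` are glued
through `Z` into a plan from `X` to `Y`. Its node cost is bounded by Minkowski's inequality, since
`Dmat ^ (1 / p)` satisfies the triangle inequality along every route that carries mass, and its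
edge term by `A_X P₁P₂ - P₁P₂A_Y = (A_X P₁ - P₁A_Z)P₂ + P₁(A_Z P₂ - P₂A_Y)`, since multiplying by
the substochastic blocks `P₁`, `P₂` does not increase the entrywise 1-norm.
-/

open Finset

section CostMatrix

variable (p c : ℝ) (X Y : Graph 𝕏)

@[simp]
lemma Dmat_castSucc_castSucc (i : Fin X.n) (j : Fin Y.n) :
    Dmat p c X Y i.castSucc j.castSucc = dist (X.nodes i) (Y.nodes j) ^ p := by
  simp [Dmat]

@[simp]
lemma Dmat_castSucc_last (i : Fin X.n) : Dmat p c X Y i.castSucc (Fin.last Y.n) = c ^ p / 2 := by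
  simp [Dmat]

@[simp]
lemma Dmat_last_castSucc (j : Fin Y.n) : Dmat p c X Y (Fin.last X.n) j.castSucc = c ^ p / 2 := by
  simp [Dmat]

@[simp]
lemma Dmat_last_last : Dmat p c X Y (Fin.last X.n) (Fin.last Y.n) = 0 := by
  simp [Dmat]

lemma Dmat_comm (i : Fin (X.n + 1)) (j : Fin (Y.n + 1)) : Dmat p c Y X j i = Dmat p c X Y i j := by
  cases i using Fin.lastCases <;> cases j using Fin.lastCases <;> simp [dist_comm]

variable {c} in
lemma Dmat_nonneg (hc : 0 ≤ c) (i : Fin (X.n + 1)) (j : Fin (Y.n + 1)) : 0 ≤ Dmat p c X Y i j := by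
  cases i using Fin.lastCases <;> cases j using Fin.lastCases <;> simp <;> positivity

end CostMatrix

lemma obj_eq_sum (p c ε : ℝ) (X Y : Graph 𝕏) (W : Matrix (Fin (X.n + 1)) (Fin (Y.n + 1)) ℝ) :
    obj p c ε X Y W = ∑ i, ∑ j, Dmat p c X Y i j * W i j +
      ε ^ p / 2 * onorm (X.A * topLeft W - topLeft W * Y.A) := by
  rw [obj, Matrix.trace_mul_comm, ← Matrix.sum_hadamard_eq]
  simp_rw [Matrix.hadamard_apply, mul_comm (W _ _)]

section OneNorm

variable {l m n : ℕ}

lemma onorm_nonneg (M : Matrix (Fin m) (Fin n) ℝ) : 0 ≤ onorm M := by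
  unfold onorm; positivity

lemma onorm_eq_zero_iff {M : Matrix (Fin m) (Fin n) ℝ} : onorm M = 0 ↔ M = 0 := by
  simp [onorm, sum_eq_zero_iff_of_nonneg, sum_nonneg, ← Matrix.ext_iff]

lemma onorm_transpose (M : Matrix (Fin m) (Fin n) ℝ) : onorm Mᵀ = onorm M := by
  simp only [onorm, Matrix.transpose_apply]
  exact sum_comm

lemma onorm_neg (M : Matrix (Fin m) (Fin n) ℝ) : onorm (-M) = onorm M := by
  simp [onorm]

lemma onorm_add_le (M N : Matrix (Fin m) (Fin n) ℝ) : onorm (M + N) ≤ onorm M + onorm N := by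
  simp only [onorm, ← sum_add_distrib]
  gcongr with i _ j _
  exact abs_add_le _ _

lemma onorm_mul_le_of_sum_row_le_one (M : Matrix (Fin l) (Fin m) ℝ) {S : Matrix (Fin m) (Fin n) ℝ}
    (hS : ∀ i j, 0 ≤ S i j) (hrow : ∀ i, ∑ j, S i j ≤ 1) : onorm (M * S) ≤ onorm M := by
  unfold onorm
  gcongr with i _
  calc ∑ j, |(M * S) i j| ≤ ∑ j, ∑ k, |M i k| * S k j := by
        gcongr with j _
        rw [Matrix.mul_apply]
        refine (abs_sum_le_sum_abs _ _).trans_eq ?_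
        simp [abs_mul, abs_of_nonneg (hS _ j)]
    _ = ∑ k, |M i k| * ∑ j, S k j := by rw [sum_comm]; simp [mul_sum]
    _ ≤ ∑ k, |M i k| := by
        gcongr with k _
        exact mul_le_of_le_one_right (abs_nonneg _) (hrow k)

lemma onorm_mul_le_of_sum_col_le_one {S : Matrix (Fin l) (Fin m) ℝ} (M : Matrix (Fin m) (Fin n) ℝ)
    (hS : ∀ i j, 0 ≤ S i j) (hcol : ∀ j, ∑ i, S i j ≤ 1) : onorm (S * M) ≤ onorm M := by
  simpa only [← Matrix.transpose_mul, onorm_transpose] using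
    onorm_mul_le_of_sum_row_le_one Mᵀ (S := Sᵀ) (fun i j => hS j i) hcol

lemma onorm_mul_mul_sub_le (A : Matrix (Fin l) (Fin l) ℝ) (B : Matrix (Fin m) (Fin m) ℝ)
    (C : Matrix (Fin n) (Fin n) ℝ) {P : Matrix (Fin l) (Fin m) ℝ} {Q : Matrix (Fin m) (Fin n) ℝ}
    (hP : ∀ i j, 0 ≤ P i j) (hPcol : ∀ j, ∑ i, P i j ≤ 1) (hQ : ∀ i j, 0 ≤ Q i j)
    (hQrow : ∀ i, ∑ j, Q i j ≤ 1) :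
    onorm (A * (P * Q) - P * Q * C) ≤ onorm (A * P - P * B) + onorm (B * Q - Q * C) := by
  have hsplit : A * (P * Q) - P * Q * C = (A * P - P * B) * Q + P * (B * Q - Q * C) := by
    simp only [Matrix.sub_mul, Matrix.mul_sub, Matrix.mul_assoc]
    abel
  rw [hsplit]
  exact (onorm_add_le _ _).trans (add_le_add (onorm_mul_le_of_sum_row_le_one _ hQ hQrow)
    (onorm_mul_le_of_sum_col_le_one _ hP hPcol))

end OneNorm

lemma weighted_Lp_add_le {ι : Type*} [Fintype ι] {p : ℝ} (hp : 1 ≤ p) {w f g : ι → ℝ}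
    (hw : ∀ i, 0 ≤ w i) (hf : ∀ i, 0 ≤ f i) (hg : ∀ i, 0 ≤ g i) {a b : ℝ} (ha : 0 ≤ a)
    (hb : 0 ≤ b) :
    (∑ i, w i * (f i + g i) ^ p + (a + b)) ^ (1 / p) ≤
      (∑ i, w i * f i ^ p + a) ^ (1 / p) + (∑ i, w i * g i ^ p + b) ^ (1 / p) := by
  have hp0 : p ≠ 0 := by positivity
  have hweight {u x : ℝ} (hu : 0 ≤ u) (hx : 0 ≤ x) : (u ^ (1 / p) * x) ^ p = u * x ^ p := by
    rw [Real.mul_rpow (by positivity) hx, ← Real.rpow_mul hu, one_div_mul_cancel hp0, Real.rpow_one]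
  have hroot {u : ℝ} (hu : 0 ≤ u) : (u ^ (1 / p)) ^ p = u := by
    rw [one_div, Real.rpow_inv_rpow hu hp0]
  -- `a` and `b` become two extra coordinates, each carried by only one of the two vectors
  let F : ι ⊕ Bool → ℝ :=
    Sum.elim (fun i => w i ^ (1 / p) * f i) fun t => bif t then a ^ (1 / p) else 0
  let G : ι ⊕ Bool → ℝ :=
    Sum.elim (fun i => w i ^ (1 / p) * g i) fun t => bif t then 0 else b ^ (1 / p)
  have hF : ∀ t ∈ univ, 0 ≤ F t := by
    rintro (i | _ | _) - <;> simp only [F, Sum.elim_inl, Sum.elim_inr, cond_true, cond_false] <;>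
      first | positivity | exact mul_nonneg (Real.rpow_nonneg (hw i) _) (hf i)
  have hG : ∀ t ∈ univ, 0 ≤ G t := by
    rintro (i | _ | _) - <;> simp only [G, Sum.elim_inl, Sum.elim_inr, cond_true, cond_false] <;>
      first | positivity | exact mul_nonneg (Real.rpow_nonneg (hw i) _) (hg i)
  have key := Real.Lp_add_le_of_nonneg (s := univ) hp hF hG
  simp only [F, G, Fintype.sum_sum_type, Fintype.sum_bool, Sum.elim_inl, Sum.elim_inr, cond_true,
    cond_false, ← mul_add, hweight (hw _) (hf _), hweight (hw _) (hg _),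
    hweight (hw _) (add_nonneg (hf _) (hg _)), add_zero, zero_add, Real.zero_rpow hp0,
    hroot ha, hroot hb] at key
  exact key

section Plans

variable {m n : ℕ} {W : Matrix (Fin (m + 1)) (Fin (n + 1)) ℝ}

lemma transpose_mem_WbarSet (hW : W ∈ WbarSet m n) : Wᵀ ∈ WbarSet n m :=
  ⟨fun i j => hW.1 j i, hW.2.2.1, hW.2.1, hW.2.2.2⟩

lemma le_one_of_mem_WbarSet (hW : W ∈ WbarSet m n) (i : Fin (m + 1)) (j : Fin (n + 1)) :
    W i j ≤ 1 := by
  obtain ⟨hpos, hcol, hrow, hcorner⟩ := hW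
  cases j using Fin.lastCases with
  | cast j =>
    exact (single_le_sum (f := (W · j.castSucc)) (fun i _ => hpos i _) (mem_univ i)).trans
      (hcol j).le
  | last =>
    cases i using Fin.lastCases with
    | cast i =>
      exact (single_le_sum (f := (W i.castSucc ·)) (fun j _ => hpos _ j) (mem_univ _)).trans
        (hrow i).le
    | last => simp [hcorner]

lemma sum_topLeft_row_le_one (hW : W ∈ WbarSet m n) (i : Fin m) : ∑ j, topLeft W i j ≤ 1 := by
  have hrow := hW.2.2.1 i
  rw [Fin.sum_univ_castSucc] at hrow
  exact le_of_add_le_of_nonneg_left hrow.le (hW.1 _ _)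

lemma sum_topLeft_col_le_one (hW : W ∈ WbarSet m n) (j : Fin n) : ∑ i, topLeft W i j ≤ 1 :=
  sum_topLeft_row_le_one (transpose_mem_WbarSet hW) j

lemma isCompact_WbarSet : IsCompact (WbarSet m n) := by
  have hclosed : IsClosed (WbarSet m n) := by
    simp only [WbarSet, Set.ofPred_and, Set.ofPred_forall]
    refine .inter (isClosed_iInter fun i => isClosed_iInter fun j =>
      isClosed_le continuous_const (by fun_prop)) (.inter (isClosed_iInter fun j =>
      isClosed_eq (by fun_prop) continuous_const) (.inter (isClosed_iInter fun i =>
      isClosed_eq (by fun_prop) continuous_const) (isClosed_eq (by fun_prop) continuous_const)))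
  refine (isCompact_univ_pi fun _ => isCompact_univ_pi fun _ => isCompact_Icc (a := (0 : ℝ))
    (b := 1)).of_isClosed_subset hclosed fun W hW => ?_
  simp only [Set.mem_univ_pi]
  exact fun i j => ⟨hW.1 i j, le_one_of_mem_WbarSet hW i j⟩

def dummyPlan (m n : ℕ) : Matrix (Fin (m + 1)) (Fin (n + 1)) ℝ :=
  fun i j => if (i = Fin.last m ↔ j = Fin.last n) then 0 else 1

lemma dummyPlan_mem_WbarSet : dummyPlan m n ∈ WbarSet m n := by
  refine ⟨fun i j => ?_, fun j => ?_, fun i => ?_, ?_⟩ <;>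
    simp [dummyPlan, apply_ite, Fin.castSucc_ne_last]

end Plans

section Objective

variable (p c ε : ℝ) (X Y : Graph 𝕏)

lemma continuous_obj : Continuous (obj p c ε X Y) := by
  have htop : Continuous (topLeft : Matrix (Fin (X.n + 1)) (Fin (Y.n + 1)) ℝ → _) :=
    continuous_matrix fun i j => continuous_apply_apply _ _
  unfold obj onorm
  refine (continuous_const.matrix_mul continuous_id).matrix_trace.add
    (continuous_const.mul (continuous_finsetSum _ fun i _ => continuous_finsetSum _ fun j _ => ?_))
  exact (((continuous_const.matrix_mul htop).sub (htop.matrix_mul continuous_const)).matrix_elem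
    i j).abs

lemma obj_transpose (W : Matrix (Fin (X.n + 1)) (Fin (Y.n + 1)) ℝ) :
    obj p c ε Y X Wᵀ = obj p c ε X Y W := by
  have hedge : Y.A * topLeft Wᵀ - topLeft Wᵀ * X.A = (-(X.A * topLeft W - topLeft W * Y.A))ᵀ := by
    rw [neg_sub, Matrix.transpose_sub, Matrix.transpose_mul, Matrix.transpose_mul, X.A_symm,
      Y.A_symm]
    rfl
  rw [obj_eq_sum, obj_eq_sum, hedge, onorm_transpose, onorm_neg, sum_comm]
  simp only [Matrix.transpose_apply, Dmat_comm]

lemma exists_gospaLP_eq : ∃ W ∈ WbarSet X.n Y.n, gospaLP p c ε X Y = obj p c ε X Y W ^ (1 / p) := by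
  obtain ⟨W, hW, hmin⟩ := isCompact_WbarSet.exists_isMinOn ⟨_, dummyPlan_mem_WbarSet⟩
    (continuous_obj p c ε X Y).continuousOn
  refine ⟨W, hW, congrArg (· ^ (1 / p)) (IsLeast.csInf_eq ⟨⟨W, hW, rfl⟩, ?_⟩)⟩
  rintro _ ⟨W', hW', rfl⟩
  exact hmin hW'

variable {p c ε}

lemma obj_nonneg (hc : 0 ≤ c) (hε : 0 ≤ ε) {W : Matrix (Fin (X.n + 1)) (Fin (Y.n + 1)) ℝ}
    (hW : W ∈ WbarSet X.n Y.n) : 0 ≤ obj p c ε X Y W := by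
  rw [obj_eq_sum]
  exact add_nonneg (sum_nonneg fun i _ => sum_nonneg fun j _ =>
    mul_nonneg (Dmat_nonneg p X Y hc i j) (hW.1 i j)) (mul_nonneg (by positivity) (onorm_nonneg _))

lemma gospaLP_le (hp : 0 ≤ p) (hc : 0 ≤ c) (hε : 0 ≤ ε)
    {W : Matrix (Fin (X.n + 1)) (Fin (Y.n + 1)) ℝ} (hW : W ∈ WbarSet X.n Y.n) :
    gospaLP p c ε X Y ≤ obj p c ε X Y W ^ (1 / p) := by
  have hlb : ∀ v ∈ {v | ∃ W ∈ WbarSet X.n Y.n, v = obj p c ε X Y W}, 0 ≤ v := by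
    rintro _ ⟨W', hW', rfl⟩
    exact obj_nonneg X Y hc hε hW'
  exact Real.rpow_le_rpow (le_csInf ⟨_, _, dummyPlan_mem_WbarSet, rfl⟩ hlb)
    (csInf_le ⟨0, hlb⟩ ⟨W, hW, rfl⟩) (by positivity)

lemma gospaLP_comm : gospaLP p c ε X Y = gospaLP p c ε Y X := by
  unfold gospaLP
  congr 2
  ext v
  constructor <;> rintro ⟨W, hW, rfl⟩ <;>
    exact ⟨Wᵀ, transpose_mem_WbarSet hW, (obj_transpose _ _ _ _ _ W).symm⟩

end Objective

section GraphEquality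

variable {X Y : Graph 𝕏}

lemma mem_edgeSet_iff (X : Graph 𝕏) (i i' : Fin X.n) :
    s(X.nodes i, X.nodes i') ∈ edgeSet X ↔ X.A i i' = 1 := by
  refine ⟨?_, fun h => ⟨i, i', h, rfl⟩⟩
  rintro ⟨a, b, hab, heq⟩
  rcases Sym2.eq_iff.mp heq with ⟨ha, hb⟩ | ⟨ha, hb⟩
  · rwa [X.nodes_inj ha, X.nodes_inj hb]
  · rwa [X.nodes_inj ha, X.nodes_inj hb, ← X.A_symm.apply]

lemma Graph.A_eq_of_eq_one_iff (X Y : Graph 𝕏) {i i' : Fin X.n} {j j' : Fin Y.n}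
    (h : Y.A j j' = 1 ↔ X.A i i' = 1) : Y.A j j' = X.A i i' := by
  rcases X.A_01 i i' with hX | hX <;> rcases Y.A_01 j j' with hY | hY <;> simp_all

lemma exists_equiv_of_nodeSet_eq (h : nodeSet X = nodeSet Y) :
    ∃ e : Fin X.n ≃ Fin Y.n, ∀ i, Y.nodes (e i) = X.nodes i := by
  have h' : Set.range X.nodes = Set.range Y.nodes := h
  exact ⟨(Equiv.ofInjective _ X.nodes_inj).trans
    ((Equiv.setCongr h').trans (Equiv.ofInjective _ Y.nodes_inj).symm),
    fun i => by simp [Equiv.apply_ofInjective_symm]⟩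

lemma graphEq_iff_exists_equiv : GraphEq X Y ↔ ∃ e : Fin X.n ≃ Fin Y.n,
    (∀ i, Y.nodes (e i) = X.nodes i) ∧ ∀ i i', Y.A (e i) (e i') = X.A i i' := by
  constructor
  · rintro ⟨hnode, hedge⟩
    obtain ⟨e, he⟩ := exists_equiv_of_nodeSet_eq hnode
    refine ⟨e, he, fun i i' => Graph.A_eq_of_eq_one_iff X Y ?_⟩
    rw [← mem_edgeSet_iff, ← mem_edgeSet_iff, he, he, hedge]
  · rintro ⟨e, he, hA⟩
    have hnodes : Y.nodes ∘ e = X.nodes := funext he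
    refine ⟨by rw [nodeSet, nodeSet, ← hnodes, e.surjective.range_comp], Set.ext fun z => ⟨?_, ?_⟩⟩
    · rintro ⟨i, i', h, rfl⟩
      exact ⟨e i, e i', (hA i i').trans h, by rw [he, he]⟩
    · rintro ⟨j, j', h, rfl⟩
      refine ⟨e.symm j, e.symm j', ?_, ?_⟩
      · rwa [← hA, e.apply_symm_apply, e.apply_symm_apply]
      · rw [← he, ← he, e.apply_symm_apply, e.apply_symm_apply]

end GraphEquality

section Pad

def padDummy {m n : ℕ} (P : Matrix (Fin m) (Fin n) ℝ) : Matrix (Fin (m + 1)) (Fin (n + 1)) ℝ :=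
  fun i j => if h : i ≠ Fin.last m ∧ j ≠ Fin.last n then P (i.castPred h.1) (j.castPred h.2) else 0

variable {m n : ℕ} (P : Matrix (Fin m) (Fin n) ℝ)

@[simp]
lemma padDummy_castSucc_castSucc (i : Fin m) (j : Fin n) :
    padDummy P i.castSucc j.castSucc = P i j := by
  simp [padDummy, Fin.castSucc_ne_last]

@[simp]
lemma padDummy_last_left (j : Fin (n + 1)) : padDummy P (Fin.last m) j = 0 := by
  simp [padDummy]

@[simp]
lemma padDummy_last_right (i : Fin (m + 1)) : padDummy P i (Fin.last n) = 0 := by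
  simp [padDummy]

@[simp]
lemma topLeft_padDummy : topLeft (padDummy P) = P := by
  ext i j
  exact padDummy_castSucc_castSucc P i j

lemma padDummy_mem_WbarSet (hP : ∀ i j, 0 ≤ P i j) (hrow : ∀ i, ∑ j, P i j = 1)
    (hcol : ∀ j, ∑ i, P i j = 1) : padDummy P ∈ WbarSet m n := by
  refine ⟨fun i j => ?_, fun j => ?_, fun i => ?_, by simp⟩
  · cases i using Fin.lastCases <;> cases j using Fin.lastCases <;> simp [hP]
  · simpa [Fin.sum_univ_castSucc] using hcol j
  · simpa [Fin.sum_univ_castSucc] using hrow i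

lemma padDummy_toMatrix_mem_WbarSet (e : Fin m ≃ Fin n) :
    padDummy (e.toPEquiv.toMatrix : Matrix (Fin m) (Fin n) ℝ) ∈ WbarSet m n := by
  refine padDummy_mem_WbarSet _ (fun i j => ?_) (fun i => ?_) (fun j => ?_)
  · simp [apply_ite]
  · simp
  · simpa using congrArg (∑ i, · i) (PEquiv.transpose_toMatrix_toPEquiv_apply (α := ℝ) e j)

end Pad

section ZeroDistance

variable {p c ε : ℝ} {X Y : Graph 𝕏}

lemma obj_eq_zero_iff (hc : 0 ≤ c) (hε : 0 < ε) {W : Matrix (Fin (X.n + 1)) (Fin (Y.n + 1)) ℝ}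
    (hW : W ∈ WbarSet X.n Y.n) : obj p c ε X Y W = 0 ↔
      (∀ i j, Dmat p c X Y i j * W i j = 0) ∧ X.A * topLeft W = topLeft W * Y.A := by
  have hterm (i j) : 0 ≤ Dmat p c X Y i j * W i j :=
    mul_nonneg (Dmat_nonneg p X Y hc i j) (hW.1 i j)
  have hεp : ε ^ p / 2 ≠ 0 := by positivity
  rw [obj_eq_sum, add_eq_zero_iff_of_nonneg (sum_nonneg fun i _ => sum_nonneg fun j _ => hterm i j)
    (mul_nonneg (by positivity) (onorm_nonneg _))]
  simp [sum_eq_zero_iff_of_nonneg, sum_nonneg, hterm, hεp, onorm_eq_zero_iff, sub_eq_zero]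

lemma obj_padDummy_toMatrix_eq_zero (hp : p ≠ 0) (hc : 0 ≤ c) (hε : 0 < ε) (e : Fin X.n ≃ Fin Y.n)
    (hnode : ∀ i, Y.nodes (e i) = X.nodes i) (hA : ∀ i i', Y.A (e i) (e i') = X.A i i') :
    obj p c ε X Y (padDummy e.toPEquiv.toMatrix) = 0 := by
  refine (obj_eq_zero_iff hc hε (padDummy_toMatrix_mem_WbarSet e)).2 ⟨fun i j => ?_, ?_⟩
  · cases i using Fin.lastCases <;> cases j using Fin.lastCases <;> simp
    rintro rfl
    simp [hnode, hp]
  · rw [topLeft_padDummy, PEquiv.toMatrix_toPEquiv_mul, PEquiv.mul_toMatrix_toPEquiv]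
    ext i j
    simp [← hA, e.apply_symm_apply]

lemma graphEq_of_intertwining {P : Matrix (Fin X.n) (Fin Y.n) ℝ} (hrow : ∀ i, ∑ j, P i j = 1)
    (hcol : ∀ j, ∑ i, P i j = 1) (hnode : ∀ i j, P i j ≠ 0 → X.nodes i = Y.nodes j)
    (hcomm : X.A * P = P * Y.A) : GraphEq X Y := by
  have hnodeSet : nodeSet X = nodeSet Y := by
    refine Set.Subset.antisymm (Set.range_subset_iff.2 fun i => ?_)
      (Set.range_subset_iff.2 fun j => ?_)
    · obtain ⟨j, -, hj⟩ := exists_ne_zero_of_sum_ne_zero ((hrow i).trans_ne one_ne_zero)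
      exact ⟨j, (hnode i j hj).symm⟩
    · obtain ⟨i, -, hi⟩ := exists_ne_zero_of_sum_ne_zero ((hcol j).trans_ne one_ne_zero)
      exact ⟨i, hnode i j hi⟩
  obtain ⟨e, he⟩ := exists_equiv_of_nodeSet_eq hnodeSet
  have hsupp (i j) (hij : P i j ≠ 0) : j = e i :=
    Y.nodes_inj ((hnode i j hij).symm.trans (he i).symm)
  have hP : P = e.toPEquiv.toMatrix := by
    ext i j
    rw [PEquiv.toMatrix_toPEquiv_apply, Pi.single_apply]
    split_ifs with h
    · subst h
      rw [← hrow i, sum_eq_single (e i) (fun j _ hj => not_not.1 (mt (hsupp i j) hj)) (by simp)]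
    · exact not_not.1 (mt (hsupp i j) h)
  rw [hP, PEquiv.toMatrix_toPEquiv_mul, PEquiv.mul_toMatrix_toPEquiv] at hcomm
  refine graphEq_iff_exists_equiv.2 ⟨e, he, fun i i' => ?_⟩
  simpa using (congrFun (congrFun hcomm i) (e i')).symm

lemma sum_topLeft_row_eq_one (hc : 0 < c) {W : Matrix (Fin (X.n + 1)) (Fin (Y.n + 1)) ℝ}
    (hW : W ∈ WbarSet X.n Y.n) (hDW : ∀ i j, Dmat p c X Y i j * W i j = 0) (i : Fin X.n) :
    ∑ j, topLeft W i j = 1 := by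
  have hdummy : W i.castSucc (Fin.last Y.n) = 0 := by
    simpa [(Real.rpow_pos_of_pos hc p).ne'] using hDW i.castSucc (Fin.last Y.n)
  simpa [Fin.sum_univ_castSucc, hdummy, topLeft] using hW.2.2.1 i

lemma sum_topLeft_col_eq_one (hc : 0 < c) {W : Matrix (Fin (X.n + 1)) (Fin (Y.n + 1)) ℝ}
    (hW : W ∈ WbarSet X.n Y.n) (hDW : ∀ i j, Dmat p c X Y i j * W i j = 0) (j : Fin Y.n) :
    ∑ i, topLeft W i j = 1 :=
  sum_topLeft_row_eq_one (X := Y) (Y := X) hc (transpose_mem_WbarSet hW)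
    (fun j i => by rw [Dmat_comm]; exact hDW i j) j

lemma nodes_eq_of_topLeft_ne_zero (hp : p ≠ 0) {W : Matrix (Fin (X.n + 1)) (Fin (Y.n + 1)) ℝ}
    (hDW : ∀ i j, Dmat p c X Y i j * W i j = 0) (i : Fin X.n) (j : Fin Y.n)
    (hij : topLeft W i j ≠ 0) : X.nodes i = Y.nodes j := by
  have := hDW i.castSucc j.castSucc
  simp only [Dmat_castSucc_castSucc, mul_eq_zero, Real.rpow_eq_zero dist_nonneg hp] at this
  exact dist_eq_zero.1 (this.resolve_right hij)

lemma gospaLP_nonneg (hc : 0 ≤ c) (hε : 0 ≤ ε) : 0 ≤ gospaLP p c ε X Y := by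
  obtain ⟨W, hW, hg⟩ := exists_gospaLP_eq p c ε X Y
  exact hg ▸ Real.rpow_nonneg (obj_nonneg X Y hc hε hW) _

lemma gospaLP_eq_zero_iff (hp : 0 < p) (hc : 0 < c) (hε : 0 < ε) :
    gospaLP p c ε X Y = 0 ↔ GraphEq X Y := by
  constructor
  · obtain ⟨W, hW, hg⟩ := exists_gospaLP_eq p c ε X Y
    rw [hg, Real.rpow_eq_zero (obj_nonneg X Y hc.le hε.le hW) (by positivity),
      obj_eq_zero_iff hc.le hε hW]
    rintro ⟨hDW, hcomm⟩
    exact graphEq_of_intertwining (sum_topLeft_row_eq_one hc hW hDW)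
      (sum_topLeft_col_eq_one hc hW hDW) (nodes_eq_of_topLeft_ne_zero hp.ne' hDW) hcomm
  · intro h
    obtain ⟨e, hnode, hA⟩ := graphEq_iff_exists_equiv.1 h
    refine le_antisymm ?_ (gospaLP_nonneg hc.le hε.le)
    calc gospaLP p c ε X Y ≤ obj p c ε X Y (padDummy e.toPEquiv.toMatrix) ^ (1 / p) :=
          gospaLP_le X Y hp.le hc.le hε.le (padDummy_toMatrix_mem_WbarSet e)
      _ = 0 := by
        rw [obj_padDummy_toMatrix_eq_zero hp.ne' hc.le hε e hnode hA,
          Real.zero_rpow (by positivity)]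

end ZeroDistance

section Composition

variable {l m n : ℕ}

/-- Mass that `W₁` sends from `i` to a real node `k` is split along `W₂`; mass that `W₁` sends to
the dummy node of the middle graph stays with the dummy, as does mass that `W₂` takes from it. -/
def route (W₁ : Matrix (Fin (l + 1)) (Fin (m + 1)) ℝ) (W₂ : Matrix (Fin (m + 1)) (Fin (n + 1)) ℝ)
    (i : Fin (l + 1)) (k : Fin (m + 1)) (j : Fin (n + 1)) : ℝ :=
  if k = Fin.last m then
    (if j = Fin.last n then W₁ i k else 0) + (if i = Fin.last l then W₂ k j else 0)
  else W₁ i k * W₂ k j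

def compPlan (W₁ : Matrix (Fin (l + 1)) (Fin (m + 1)) ℝ)
    (W₂ : Matrix (Fin (m + 1)) (Fin (n + 1)) ℝ) : Matrix (Fin (l + 1)) (Fin (n + 1)) ℝ :=
  fun i j => if i = Fin.last l ∧ j = Fin.last n then 0 else ∑ k, route W₁ W₂ i k j

variable {W₁ : Matrix (Fin (l + 1)) (Fin (m + 1)) ℝ} {W₂ : Matrix (Fin (m + 1)) (Fin (n + 1)) ℝ}

lemma route_nonneg (h₁ : ∀ i k, 0 ≤ W₁ i k) (h₂ : ∀ k j, 0 ≤ W₂ k j) (i k j) :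
    0 ≤ route W₁ W₂ i k j := by
  have := h₁ i k
  have := h₂ k j
  unfold route
  split_ifs <;> positivity

lemma route_transpose (i k j) : route W₂ᵀ W₁ᵀ j k i = route W₁ W₂ i k j := by
  unfold route
  split_ifs <;> simp [add_comm, mul_comm]

lemma route_last_of_ne_last {i : Fin (l + 1)} {j : Fin (n + 1)} (hi : i ≠ Fin.last l)
    (hj : j ≠ Fin.last n) : route W₁ W₂ i (Fin.last m) j = 0 := by
  simp [route, hi, hj]

lemma sum_route_right (h₂ : W₂ ∈ WbarSet m n) {i : Fin (l + 1)} {k : Fin (m + 1)}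
    (hik : i ≠ Fin.last l ∨ k ≠ Fin.last m) : ∑ j, route W₁ W₂ i k j = W₁ i k := by
  cases k using Fin.lastCases with
  | last => simp [route, hik.resolve_right (not_not.2 rfl)]
  | cast k => simp [route, Fin.castSucc_ne_last, ← mul_sum, h₂.2.2.1 k]

lemma sum_route_left (h₁ : W₁ ∈ WbarSet l m) {k : Fin (m + 1)} {j : Fin (n + 1)}
    (hkj : j ≠ Fin.last n ∨ k ≠ Fin.last m) : ∑ i, route W₁ W₂ i k j = W₂ k j := by
  simpa only [route_transpose, Matrix.transpose_apply] using
    sum_route_right (W₁ := W₂ᵀ) (transpose_mem_WbarSet h₁) hkj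

lemma compPlan_mem_WbarSet (h₁ : W₁ ∈ WbarSet l m) (h₂ : W₂ ∈ WbarSet m n) :
    compPlan W₁ W₂ ∈ WbarSet l n := by
  refine ⟨fun i j => ?_, fun j => ?_, fun i => ?_, by simp [compPlan]⟩
  · unfold compPlan
    split_ifs
    exacts [le_rfl, sum_nonneg fun k _ => route_nonneg h₁.1 h₂.1 i k j]
  · simp only [compPlan, Fin.castSucc_ne_last, and_false, if_false]
    rw [sum_comm]
    exact (sum_congr rfl fun k _ => sum_route_left h₁ (.inl (Fin.castSucc_ne_last j))).trans
      (h₂.2.1 j)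
  · simp only [compPlan, Fin.castSucc_ne_last, false_and, if_false]
    rw [sum_comm]
    exact (sum_congr rfl fun k _ => sum_route_right h₂ (.inl (Fin.castSucc_ne_last i))).trans
      (h₁.2.2.1 i)

lemma topLeft_compPlan : topLeft (compPlan W₁ W₂) = topLeft W₁ * topLeft W₂ := by
  ext i j
  simp [topLeft, compPlan, Fin.sum_univ_castSucc, route, Fin.castSucc_ne_last, Matrix.mul_apply]

lemma sum_route_mul_left (h₂ : W₂ ∈ WbarSet m n) (C : Matrix (Fin (l + 1)) (Fin (m + 1)) ℝ)
    (hC : C (Fin.last l) (Fin.last m) = 0) :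
    ∑ i, ∑ k, ∑ j, route W₁ W₂ i k j * C i k = ∑ i, ∑ k, C i k * W₁ i k := by
  refine sum_congr rfl fun i _ => sum_congr rfl fun k _ => ?_
  rw [← sum_mul]
  by_cases hik : i = Fin.last l ∧ k = Fin.last m
  · obtain ⟨rfl, rfl⟩ := hik
    simp [hC]
  · rw [sum_route_right h₂ (not_and_or.1 hik), mul_comm]

lemma sum_route_mul_right (h₁ : W₁ ∈ WbarSet l m) (C : Matrix (Fin (m + 1)) (Fin (n + 1)) ℝ)
    (hC : C (Fin.last m) (Fin.last n) = 0) :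
    ∑ i, ∑ k, ∑ j, route W₁ W₂ i k j * C k j = ∑ k, ∑ j, C k j * W₂ k j := by
  rw [sum_comm]
  refine sum_congr rfl fun k _ => ?_
  rw [sum_comm]
  refine sum_congr rfl fun j _ => ?_
  rw [← sum_mul]
  by_cases hkj : j = Fin.last n ∧ k = Fin.last m
  · obtain ⟨rfl, rfl⟩ := hkj
    simp [hC]
  · rw [sum_route_left h₁ (not_and_or.1 hkj), mul_comm]

end Composition

section Triangle

variable {p c ε : ℝ} {X Z Y : Graph 𝕏}

/-- `Dmat ^ (1 / p)` puts the dummy node at distance `(c ^ p / 2) ^ (1 / p)` from every real node,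
so its triangle inequality fails only for a detour between two real nodes through the dummy. -/
lemma Dmat_le_rpow_add (hp : 0 < p) (hc : 0 ≤ c) {i : Fin (X.n + 1)} {k : Fin (Z.n + 1)}
    {j : Fin (Y.n + 1)} (h : k ≠ Fin.last Z.n ∨ i = Fin.last X.n ∨ j = Fin.last Y.n) :
    Dmat p c X Y i j ≤ (Dmat p c X Z i k ^ (1 / p) + Dmat p c Z Y k j ^ (1 / p)) ^ p := by
  have htri : Dmat p c X Y i j ^ (1 / p) ≤
      Dmat p c X Z i k ^ (1 / p) + Dmat p c Z Y k j ^ (1 / p) := by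
    have hc' : 0 ≤ (c ^ p / 2) ^ p⁻¹ := by positivity
    cases i using Fin.lastCases <;> cases k using Fin.lastCases <;> cases j using Fin.lastCases <;>
      simp [Fin.castSucc_ne_last, Real.rpow_rpow_inv dist_nonneg hp.ne',
        Real.zero_rpow (inv_ne_zero hp.ne'), dist_nonneg, hc'] at h ⊢
    exact dist_triangle _ _ _
  have hD := Dmat_nonneg p X Y hc i j
  calc Dmat p c X Y i j = (Dmat p c X Y i j ^ (1 / p)) ^ p := by
        rw [one_div, Real.rpow_inv_rpow hD hp.ne']
    _ ≤ _ := Real.rpow_le_rpow (by positivity) htri hp.le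

variable {W₁ : Matrix (Fin (X.n + 1)) (Fin (Z.n + 1)) ℝ}
  {W₂ : Matrix (Fin (Z.n + 1)) (Fin (Y.n + 1)) ℝ}

lemma sum_Dmat_mul_compPlan_le (hp : 0 < p) (hc : 0 ≤ c) (h₁ : W₁ ∈ WbarSet X.n Z.n)
    (h₂ : W₂ ∈ WbarSet Z.n Y.n) :
    ∑ i, ∑ j, Dmat p c X Y i j * compPlan W₁ W₂ i j ≤
      ∑ i, ∑ k, ∑ j,
        route W₁ W₂ i k j * (Dmat p c X Z i k ^ (1 / p) + Dmat p c Z Y k j ^ (1 / p)) ^ p := by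
  have hroute := route_nonneg h₁.1 h₂.1
  have hcost (i k j) : 0 ≤ (Dmat p c X Z i k ^ (1 / p) + Dmat p c Z Y k j ^ (1 / p)) ^ p :=
    Real.rpow_nonneg (add_nonneg (Real.rpow_nonneg (Dmat_nonneg p X Z hc i k) _)
      (Real.rpow_nonneg (Dmat_nonneg p Z Y hc k j) _)) _
  refine sum_le_sum fun i _ => ?_
  rw [sum_comm]
  refine sum_le_sum fun j _ => ?_
  unfold compPlan
  split_ifs with hij
  · rw [mul_zero]
    exact sum_nonneg fun k _ => mul_nonneg (hroute i k j) (hcost i k j)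
  rw [mul_sum]
  refine sum_le_sum fun k _ => ?_
  by_cases hr : route W₁ W₂ i k j = 0
  · simp [hr]
  rw [mul_comm]
  refine mul_le_mul_of_nonneg_left (Dmat_le_rpow_add hp hc ?_) (hroute i k j)
  by_contra! h
  obtain ⟨rfl, hi, hj⟩ := h
  exact hr (route_last_of_ne_last hi hj)

lemma obj_compPlan_rpow_le (hp : 1 ≤ p) (hc : 0 ≤ c) (hε : 0 ≤ ε) (h₁ : W₁ ∈ WbarSet X.n Z.n)
    (h₂ : W₂ ∈ WbarSet Z.n Y.n) :
    obj p c ε X Y (compPlan W₁ W₂) ^ (1 / p) ≤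
      obj p c ε X Z W₁ ^ (1 / p) + obj p c ε Z Y W₂ ^ (1 / p) := by
  have hp0 : 0 < p := by positivity
  have hroot {u : ℝ} (hu : 0 ≤ u) : (u ^ (1 / p)) ^ p = u := by
    rw [one_div, Real.rpow_inv_rpow hu hp0.ne']
  have hεp : 0 ≤ ε ^ p / 2 := by positivity
  have hedge : ε ^ p / 2 * onorm (X.A * topLeft (compPlan W₁ W₂) - topLeft (compPlan W₁ W₂) * Y.A) ≤
      ε ^ p / 2 * onorm (X.A * topLeft W₁ - topLeft W₁ * Z.A) +
        ε ^ p / 2 * onorm (Z.A * topLeft W₂ - topLeft W₂ * Y.A) := by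
    rw [topLeft_compPlan, ← mul_add]
    exact mul_le_mul_of_nonneg_left (onorm_mul_mul_sub_le _ _ _ (fun i j => h₁.1 _ _)
      (sum_topLeft_col_le_one h₁) (fun i j => h₂.1 _ _) (sum_topLeft_row_le_one h₂)) hεp
  have hmink := weighted_Lp_add_le hp (ι := Fin (X.n + 1) × Fin (Z.n + 1) × Fin (Y.n + 1))
    (w := fun t => route W₁ W₂ t.1 t.2.1 t.2.2)
    (f := fun t => Dmat p c X Z t.1 t.2.1 ^ (1 / p))
    (g := fun t => Dmat p c Z Y t.2.1 t.2.2 ^ (1 / p))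
    (fun t => route_nonneg h₁.1 h₂.1 _ _ _) (fun t => Real.rpow_nonneg (Dmat_nonneg p X Z hc _ _) _)
    (fun t => Real.rpow_nonneg (Dmat_nonneg p Z Y hc _ _) _)
    (mul_nonneg hεp (onorm_nonneg (X.A * topLeft W₁ - topLeft W₁ * Z.A)))
    (mul_nonneg hεp (onorm_nonneg (Z.A * topLeft W₂ - topLeft W₂ * Y.A)))
  simp only [Fintype.sum_prod_type, hroot (Dmat_nonneg p _ _ hc _ _)] at hmink
  rw [sum_route_mul_left h₂ _ (Dmat_last_last p c X Z),
    sum_route_mul_right h₁ _ (Dmat_last_last p c Z Y), ← obj_eq_sum, ← obj_eq_sum] at hmink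
  refine le_trans (Real.rpow_le_rpow (obj_nonneg X Y hc hε (compPlan_mem_WbarSet h₁ h₂)) ?_
    (by positivity)) hmink
  rw [obj_eq_sum]
  exact add_le_add (sum_Dmat_mul_compPlan_le hp0 hc h₁ h₂) hedge

lemma gospaLP_triangle (hp : 1 ≤ p) (hc : 0 ≤ c) (hε : 0 ≤ ε) (X Y Z : Graph 𝕏) :
    gospaLP p c ε X Y ≤ gospaLP p c ε X Z + gospaLP p c ε Z Y := by
  obtain ⟨W₁, h₁, hXZ⟩ := exists_gospaLP_eq p c ε X Z
  obtain ⟨W₂, h₂, hZY⟩ := exists_gospaLP_eq p c ε Z Y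
  rw [hXZ, hZY]
  exact (gospaLP_le X Y (by positivity) hc hε (compPlan_mem_WbarSet h₁ h₂)).trans
    (obj_compPlan_rpow_le hp hc hε h₁ h₂)

end Triangle

/-- For `1 ≤ p < ∞`, `c > 0`, `ε > 0` and base metric `d`, the LP
graph GOSPA distance `d̄^{(c,ε)}` is a metric on the space of undirected unweighted
graphs with node attributes: identity, symmetry and the triangle inequality hold. -/
theorem lp_graph_gospa_is_metric (p c ε : ℝ) (hp : 1 ≤ p) (hc : 0 < c) (hε : 0 < ε) :
    (∀ X Y : Graph 𝕏, gospaLP p c ε X Y = 0 ↔ GraphEq X Y) ∧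
    (∀ X Y : Graph 𝕏, gospaLP p c ε X Y = gospaLP p c ε Y X) ∧
    (∀ X Y Z : Graph 𝕏,
      gospaLP p c ε X Y ≤ gospaLP p c ε X Z + gospaLP p c ε Z Y) :=
  ⟨fun _ _ => gospaLP_eq_zero_iff (by positivity) hc hε, gospaLP_comm,
    gospaLP_triangle hp hc.le hε.le⟩

end GraphGOSPA
end

section
/- Let A_X ∈ ℝ^{n_X×n_X}, A_Z ∈ ℝ^{n_Z×n_Z}, A_Y ∈ ℝ^{n_Y×n_Y} be arbitrary real matrices, and let W₁ ∈ ℝ^{n_X×n_Z} and W₂ ∈ ℝ^{n_Z×n_Y} be entrywise nonnegative matrices such that every column of W₁ sums to at most 1 and every row of W₂ sums to at most 1. Then ‖A_X (W₁W₂) − (W₁W₂) A_Y‖ ≤ ‖A_X W₁ − W₁ A_Z‖ + ‖A_Z W₂ − W₂ A_Y‖, where ‖M‖ = Σ_{i,j}|M(i,j)| is the componentwise 1-norm. -/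
open scoped BigOperators

namespace GraphGOSPA

/-- Let `A_X`, `A_Z`, `A_Y` be arbitrary square real matrices and
`W₁`, `W₂` entrywise nonnegative matrices such that every column of `W₁` sums to at
most 1 and every row of `W₂` sums to at most 1. Then
`‖A_X (W₁W₂) − (W₁W₂) A_Y‖ ≤ ‖A_X W₁ − W₁ A_Z‖ + ‖A_Z W₂ − W₂ A_Y‖`. -/
theorem edge_cost_triangle {nX nZ nY : ℕ}
    (AX : Matrix (Fin nX) (Fin nX) ℝ) (AZ : Matrix (Fin nZ) (Fin nZ) ℝ)
    (AY : Matrix (Fin nY) (Fin nY) ℝ)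
    (W₁ : Matrix (Fin nX) (Fin nZ) ℝ) (W₂ : Matrix (Fin nZ) (Fin nY) ℝ)
    (hW₁ : ∀ i l, 0 ≤ W₁ i l) (hW₂ : ∀ l j, 0 ≤ W₂ l j)
    (hW₁col : ∀ l, ∑ i, W₁ i l ≤ 1) (hW₂row : ∀ l, ∑ j, W₂ l j ≤ 1) :
    onorm (AX * (W₁ * W₂) - (W₁ * W₂) * AY) ≤
      onorm (AX * W₁ - W₁ * AZ) + onorm (AZ * W₂ - W₂ * AY) := by
  have key : AX * (W₁ * W₂) - (W₁ * W₂) * AY =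
      (AX * W₁ - W₁ * AZ) * W₂ + W₁ * (AZ * W₂ - W₂ * AY) := by
    simp only [Matrix.sub_mul, Matrix.mul_sub, Matrix.mul_assoc]
    abel
  rw [key]
  set B := AX * W₁ - W₁ * AZ
  set C := AZ * W₂ - W₂ * AY
  have tri : onorm (B * W₂ + W₁ * C) ≤ onorm (B * W₂) + onorm (W₁ * C) := by
    unfold onorm
    rw [← Finset.sum_add_distrib]
    refine Finset.sum_le_sum fun i _ => ?_
    rw [← Finset.sum_add_distrib]
    refine Finset.sum_le_sum fun j _ => ?_
    simpa [Matrix.add_apply] using abs_add_le ((B * W₂) i j) ((W₁ * C) i j)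
  have h1 : onorm (B * W₂) ≤ onorm B := by
    unfold onorm
    refine Finset.sum_le_sum fun i _ => ?_
    calc ∑ j, |(B * W₂) i j|
        ≤ ∑ j, ∑ l, |B i l| * W₂ l j := by
          refine Finset.sum_le_sum fun j _ => ?_
          rw [Matrix.mul_apply]
          refine (Finset.abs_sum_le_sum_abs _ _).trans ?_
          refine Finset.sum_le_sum fun l _ => ?_
          rw [abs_mul, abs_of_nonneg (hW₂ l j)]
      _ = ∑ l, |B i l| * ∑ j, W₂ l j := by
          rw [Finset.sum_comm]; simp [Finset.mul_sum]
      _ ≤ ∑ l, |B i l| * 1 := by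
          refine Finset.sum_le_sum fun l _ => ?_
          exact mul_le_mul_of_nonneg_left (hW₂row l) (abs_nonneg _)
      _ = ∑ l, |B i l| := by simp
  have h2 : onorm (W₁ * C) ≤ onorm C := by
    unfold onorm
    calc ∑ i, ∑ j, |(W₁ * C) i j|
        ≤ ∑ i, ∑ j, ∑ l, W₁ i l * |C l j| := by
          refine Finset.sum_le_sum fun i _ => Finset.sum_le_sum fun j _ => ?_
          rw [Matrix.mul_apply]
          refine (Finset.abs_sum_le_sum_abs _ _).trans ?_
          refine Finset.sum_le_sum fun l _ => ?_
          rw [abs_mul, abs_of_nonneg (hW₁ i l)]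
      _ = ∑ i, ∑ l, ∑ j, W₁ i l * |C l j| := by
          exact Finset.sum_congr rfl fun i _ => Finset.sum_comm
      _ = ∑ l, ∑ i, ∑ j, W₁ i l * |C l j| := Finset.sum_comm
      _ = ∑ l, (∑ i, W₁ i l) * ∑ j, |C l j| := by
          simp only [Finset.sum_mul, Finset.mul_sum]
          exact Finset.sum_congr rfl fun l _ => Finset.sum_comm
      _ ≤ ∑ l, 1 * ∑ j, |C l j| := by
          refine Finset.sum_le_sum fun l _ => ?_
          exact mul_le_mul_of_nonneg_right (hW₁col l)
            (Finset.sum_nonneg fun j _ => abs_nonneg _)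
      _ = ∑ l, ∑ j, |C l j| := by simp
  linarith

end GraphGOSPA
end

section
/- Let W_{X,Z} ∈ 𝒲̄_{X,Z} and W_{Z,Y} ∈ 𝒲̄_{Z,Y}. Define the (n_X+1)×(n_Y+1) matrix W_{X,Y} by: W_{X,Y}(i,j) = Σ_{l=1}^{n_Z} W_{X,Z}(i,l) W_{Z,Y}(l,j) for i ≤ n_X and j ≤ n_Y; W_{X,Y}(i, n_Y+1) = 1 − Σ_{j=1}^{n_Y} W_{X,Y}(i,j) for i ≤ n_X; W_{X,Y}(n_X+1, j) = 1 − Σ_{i=1}^{n_X} W_{X,Y}(i,j) for j ≤ n_Y; and W_{X,Y}(n_X+1, n_Y+1) = 0. Then W_{X,Y} ∈ 𝒲̄_{X,Y}; in particular all its entries are nonnegative. -/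
open scoped BigOperators

namespace GraphGOSPA

/-- The composed assignment matrix `W_{X,Y}` built from `W_{X,Z}` and `W_{Z,Y}`:
`W_{X,Y}(i,j) = Σ_{l=1}^{n_Z} W_{X,Z}(i,l) W_{Z,Y}(l,j)` for `i ≤ n_X`, `j ≤ n_Y`,
with the last column and last row filled so that rows and columns sum to 1, and a
zero bottom-right corner. -/
noncomputable def compose {nX nZ nY : ℕ}
    (WXZ : Matrix (Fin (nX+1)) (Fin (nZ+1)) ℝ)
    (WZY : Matrix (Fin (nZ+1)) (Fin (nY+1)) ℝ) :
    Matrix (Fin (nX+1)) (Fin (nY+1)) ℝ :=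
  fun i j =>
    if (i : ℕ) < nX then
      if (j : ℕ) < nY then
        ∑ l : Fin nZ, WXZ i l.castSucc * WZY l.castSucc j
      else
        1 - ∑ j' : Fin nY, ∑ l : Fin nZ, WXZ i l.castSucc * WZY l.castSucc j'.castSucc
    else
      if (j : ℕ) < nY then
        1 - ∑ i' : Fin nX, ∑ l : Fin nZ, WXZ i'.castSucc l.castSucc * WZY l.castSucc j
      else 0

/-- If `W_{X,Z} ∈ 𝒲̄_{X,Z}` and `W_{Z,Y} ∈ 𝒲̄_{Z,Y}`, then the
composed matrix `W_{X,Y}` belongs to `𝒲̄_{X,Y}`; in particular all its entries are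
nonnegative. -/
theorem compose_mem_WbarSet {nX nZ nY : ℕ}
    (WXZ : Matrix (Fin (nX+1)) (Fin (nZ+1)) ℝ)
    (WZY : Matrix (Fin (nZ+1)) (Fin (nY+1)) ℝ)
    (hXZ : WXZ ∈ WbarSet nX nZ) (hZY : WZY ∈ WbarSet nZ nY) :
    compose WXZ WZY ∈ WbarSet nX nY := by
  obtain ⟨hA0, hAcol, hArow, hAcorner⟩ := hXZ
  obtain ⟨hB0, hBcol, hBrow, hBcorner⟩ := hZY
  have key_row : ∀ i : Fin (nX+1), (i : ℕ) < nX →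
      ∑ j' : Fin nY, ∑ l : Fin nZ, WXZ i l.castSucc * WZY l.castSucc j'.castSucc ≤ 1 := by
    intro i hi
    rw [Finset.sum_comm]
    have h1 : ∀ l : Fin nZ,
        ∑ j' : Fin nY, WXZ i l.castSucc * WZY l.castSucc j'.castSucc ≤ WXZ i l.castSucc := by
      intro l
      rw [← Finset.mul_sum]
      have hs : ∑ j' : Fin nY, WZY l.castSucc j'.castSucc ≤ 1 := by
        have h := hBrow l
        rw [Fin.sum_univ_castSucc] at h
        have h2 := hB0 l.castSucc (Fin.last nY)
        linarith
      have hs0 : 0 ≤ ∑ j' : Fin nY, WZY l.castSucc j'.castSucc :=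
        Finset.sum_nonneg fun j' _ => hB0 _ _
      nlinarith [hA0 i l.castSucc]
    calc ∑ l : Fin nZ, ∑ j' : Fin nY, WXZ i l.castSucc * WZY l.castSucc j'.castSucc
        ≤ ∑ l : Fin nZ, WXZ i l.castSucc := Finset.sum_le_sum fun l _ => h1 l
      _ ≤ 1 := by
        obtain ⟨i', rfl⟩ : ∃ i' : Fin nX, i'.castSucc = i := ⟨⟨i, hi⟩, rfl⟩
        have h := hArow i'
        rw [Fin.sum_univ_castSucc] at h
        have h2 := hA0 i'.castSucc (Fin.last nZ)
        linarith
  have key_col : ∀ j : Fin (nY+1), (j : ℕ) < nY →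
      ∑ i' : Fin nX, ∑ l : Fin nZ, WXZ i'.castSucc l.castSucc * WZY l.castSucc j ≤ 1 := by
    intro j hj
    rw [Finset.sum_comm]
    have h1 : ∀ l : Fin nZ,
        ∑ i' : Fin nX, WXZ i'.castSucc l.castSucc * WZY l.castSucc j ≤ WZY l.castSucc j := by
      intro l
      rw [← Finset.sum_mul]
      have hs : ∑ i' : Fin nX, WXZ i'.castSucc l.castSucc ≤ 1 := by
        have h := hAcol l
        rw [Fin.sum_univ_castSucc] at h
        have h2 := hA0 (Fin.last nX) l.castSucc
        linarith
      have hs0 : 0 ≤ ∑ i' : Fin nX, WXZ i'.castSucc l.castSucc :=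
        Finset.sum_nonneg fun i' _ => hA0 _ _
      nlinarith [hB0 l.castSucc j]
    calc ∑ l : Fin nZ, ∑ i' : Fin nX, WXZ i'.castSucc l.castSucc * WZY l.castSucc j
        ≤ ∑ l : Fin nZ, WZY l.castSucc j := Finset.sum_le_sum fun l _ => h1 l
      _ ≤ 1 := by
        obtain ⟨j', rfl⟩ : ∃ j' : Fin nY, j'.castSucc = j := ⟨⟨j, hj⟩, rfl⟩
        have h := hBcol j'
        rw [Fin.sum_univ_castSucc] at h
        have h2 := hB0 (Fin.last nZ) j'.castSucc
        linarith
  refine ⟨?_, ?_, ?_, ?_⟩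
  · intro i j
    unfold compose
    split_ifs with h1 h2 h3
    · exact Finset.sum_nonneg fun l _ => mul_nonneg (hA0 _ _) (hB0 _ _)
    · linarith [key_row i h1]
    · linarith [key_col j h3]
    · exact le_refl 0
  · intro j
    have hj : ((j.castSucc : Fin (nY+1)) : ℕ) < nY := j.isLt
    rw [Fin.sum_univ_castSucc]
    have hlast : compose WXZ WZY (Fin.last nX) j.castSucc
        = 1 - ∑ i' : Fin nX, ∑ l : Fin nZ,
            WXZ i'.castSucc l.castSucc * WZY l.castSucc j.castSucc := by
      simp [compose, hj]
    have hmid : ∀ i' : Fin nX, compose WXZ WZY i'.castSucc j.castSucc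
        = ∑ l : Fin nZ, WXZ i'.castSucc l.castSucc * WZY l.castSucc j.castSucc := by
      intro i'
      simp [compose, hj, i'.isLt]
    rw [hlast, Finset.sum_congr rfl fun i' _ => hmid i']
    ring
  · intro i
    have hi : ((i.castSucc : Fin (nX+1)) : ℕ) < nX := i.isLt
    rw [Fin.sum_univ_castSucc]
    have hlast : compose WXZ WZY i.castSucc (Fin.last nY)
        = 1 - ∑ j' : Fin nY, ∑ l : Fin nZ,
            WXZ i.castSucc l.castSucc * WZY l.castSucc j'.castSucc := by
      simp [compose, hi]
    have hmid : ∀ j' : Fin nY, compose WXZ WZY i.castSucc j'.castSucc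
        = ∑ l : Fin nZ, WXZ i.castSucc l.castSucc * WZY l.castSucc j'.castSucc := by
      intro j'
      simp [compose, hi, j'.isLt]
    rw [hlast, Finset.sum_congr rfl fun j' _ => hmid j']
    ring
  · simp [compose]

end GraphGOSPA
end
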